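/- arXiv:2307.12066 — 5 statements merged into one kernel-verified Lean document; each statement's English description precedes it below -/
import Mathlib

section
/- Let g ≥ 2, let Π_g be the genus-g surface group with standard generators a₁, b₁, …, a_g, b_g, and let ε : Π_g → ZMod 2 be a surjective group homomorphism. Then there exists an automorphism θ of Π_g such that ε(θ(a₁)) = 1, while ε(θ(b₁)) = 0 and ε(θ(a_i)) = ε(θ(b_i)) = 0 for all i ∈ {2, …, g}. -/
/-!
Precomposing `ε` with an automorphism changes the vector of its values on the generators, one
pair `(ε aₖ, ε bₖ) ∈ (ℤ/2)²` per handle. The Dehn twists `aᵢ ↦ aᵢ bᵢ` and `bᵢ ↦ bᵢ aᵢ` act on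
the pair of handle `i` by transvections generating `SL₂(ℤ/2)`, which is transitive on nonzero
pairs, and an automorphism mixing the adjacent handles `i, i + 1` moves value from one to the
other. Clearing the nonzero handles from the top down leaves `(1, 0)` on the first handle. Every
move is an involution mod 2, so reachability of value vectors is symmetric.
-/

open scoped commutatorElement

/-- The relator `[a₁,b₁][a₂,b₂]⋯[a_g,b_g]` of the genus-`g` surface group, in the free
group on generators `(i, true) = aᵢ` and `(i, false) = bᵢ` for `i : Fin g`. -/
def surfaceRelator (g : ℕ) : FreeGroup (Fin g × Bool) :=
  ((List.finRange g).map
    (fun i => ⁅FreeGroup.of (i, true), FreeGroup.of (i, false)⁆)).prod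

/-- The genus-`g` surface group, i.e. the fundamental group of the closed orientable
surface of genus `g`, presented with `2g` generators and one relator. -/
def SurfaceGroup (g : ℕ) : Type :=
  PresentedGroup ({surfaceRelator g} : Set (FreeGroup (Fin g × Bool)))

instance (g : ℕ) : Group (SurfaceGroup g) := by
  unfold SurfaceGroup; infer_instance

/-- The standard handle generator `aᵢ` of the surface group. -/
def agen {g : ℕ} (i : Fin g) : SurfaceGroup g := PresentedGroup.of (i, true)

/-- The standard handle generator `bᵢ` of the surface group. -/
def bgen {g : ℕ} (i : Fin g) : SurfaceGroup g := PresentedGroup.of (i, false)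

open Function (update)

lemma List.prod_map_eq_of_infix {M ι : Type*} [Monoid M] {l : List ι} (hl : l.Nodup)
    {i j : ι} (hij : [i, j] <:+: l) {F F' : ι → M} (hoff : ∀ k, k ≠ i → k ≠ j → F k = F' k)
    (hpair : F i * F j = F' i * F' j) : (l.map F).prod = (l.map F').prod := by
  obtain ⟨s, t, rfl⟩ := hij
  have hst : ∀ k ∈ s ++ t, F k = F' k := by
    intro k hk
    simp only [List.nodup_append, List.nodup_cons, List.mem_cons, List.mem_append] at hl
    apply hoff <;> rintro rfl <;> grind
  simp only [List.map_append, List.prod_append, List.map_cons, List.prod_cons, List.map_nil,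
    List.prod_nil, mul_one, ← mul_assoc, hpair]
  rw [List.map_congr_left fun k hk => hst k (List.mem_append_left t hk),
    List.map_congr_left fun k hk => hst k (List.mem_append_right s hk)]

lemma List.pair_infix_finRange {n : ℕ} {i j : Fin n} (hij : i.val + 1 = j.val) :
    [i, j] <:+: List.finRange n := by
  refine ⟨(List.finRange n).take i, (List.finRange n).drop (i + 2), ?_⟩
  have hi : i.val < (List.finRange n).length := by simp
  have hj : i.val + 1 < (List.finRange n).length := by simp; omega
  conv_rhs => rw [← List.take_append_drop i (List.finRange n), List.drop_eq_getElem_cons hi,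
    List.drop_eq_getElem_cons hj]
  simp [hij]
  omega

lemma Fin.ne_of_val_add_one_eq {n : ℕ} {i j : Fin n} (hij : i.val + 1 = j.val) : i ≠ j :=
  Fin.ne_of_val_ne (by omega)

namespace SurfaceGroup

variable {g : ℕ}

section Presentation

variable {G H : Type*} [Group G] [Group H]

def relatorProd (f : Fin g × Bool → G) : G :=
  ((List.finRange g).map fun i => ⁅f (i, true), f (i, false)⁆).prod

lemma map_relatorProd (φ : G →* H) (f : Fin g × Bool → G) :
    φ (relatorProd f) = relatorProd (φ ∘ f) := by
  simp [relatorProd, map_list_prod, map_commutatorElement, Function.comp_def]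

lemma relatorProd_eq_of_handle {f f' : Fin g × Bool → G} {i : Fin g}
    (hoff : ∀ x : Fin g × Bool, x.1 ≠ i → f x = f' x)
    (hi : ⁅f (i, true), f (i, false)⁆ = ⁅f' (i, true), f' (i, false)⁆) :
    relatorProd f = relatorProd f' := by
  refine congrArg List.prod (List.map_congr_left fun k _ => ?_)
  rcases eq_or_ne k i with rfl | hk
  · exact hi
  · rw [hoff _ hk, hoff _ hk]

lemma relatorProd_eq_of_adjacent {f f' : Fin g × Bool → G} {i j : Fin g}
    (hij : i.val + 1 = j.val) (hoff : ∀ x : Fin g × Bool, x.1 ≠ i → x.1 ≠ j → f x = f' x)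
    (hpair : ⁅f (i, true), f (i, false)⁆ * ⁅f (j, true), f (j, false)⁆ =
      ⁅f' (i, true), f' (i, false)⁆ * ⁅f' (j, true), f' (j, false)⁆) :
    relatorProd f = relatorProd f' :=
  List.prod_map_eq_of_infix (List.nodup_finRange g) (List.pair_infix_finRange hij)
    (fun k hi hj => by rw [hoff (k, true) hi hj, hoff (k, false) hi hj]) hpair

def of (x : Fin g × Bool) : SurfaceGroup g := PresentedGroup.of x

@[simp] lemma agen_eq_of (i : Fin g) : agen i = of (i, true) := rfl

@[simp] lemma bgen_eq_of (i : Fin g) : bgen i = of (i, false) := rfl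

lemma relatorProd_of : relatorProd (of : Fin g × Bool → SurfaceGroup g) = 1 := by
  have h := PresentedGroup.one_of_mem (Set.mem_singleton (surfaceRelator g))
  rwa [surfaceRelator, ← relatorProd, map_relatorProd] at h

def lift (f : Fin g × Bool → G) (hf : relatorProd f = 1) : SurfaceGroup g →* G :=
  PresentedGroup.toGroup (f := f) <| by
    rintro _ rfl
    rw [surfaceRelator, ← relatorProd, map_relatorProd]
    simpa [Function.comp_def] using hf

@[simp]
lemma lift_of (f : Fin g × Bool → G) (hf : relatorProd f = 1) (x : Fin g × Bool) :
    lift f hf (of x) = f x :=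
  PresentedGroup.toGroup.of _

lemma hom_ext {φ ψ : SurfaceGroup g →* G} (h : ∀ x, φ (of x) = ψ (of x)) : φ = ψ :=
  PresentedGroup.ext h

end Presentation

def liftEquiv (f f' : Fin g × Bool → SurfaceGroup g) (hf : relatorProd f = 1)
    (hf' : relatorProd f' = 1) (h : ∀ x, lift f' hf' (f x) = of x)
    (h' : ∀ x, lift f hf (f' x) = of x) : SurfaceGroup g ≃* SurfaceGroup g :=
  (lift f hf).toMulEquiv (lift f' hf') (hom_ext fun x => by simpa using h x)
    (hom_ext fun x => by simpa using h' x)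

@[simp]
lemma liftEquiv_of (f f' : Fin g × Bool → SurfaceGroup g) (hf hf' h h') (x : Fin g × Bool) :
    liftEquiv f f' hf hf' h h' (of x) = f x :=
  lift_of f hf x

def twistA (i : Fin g) (n : ℤ) : Fin g × Bool → SurfaceGroup g :=
  update of (i, true) (agen i * bgen i ^ n)

lemma relatorProd_twistA (i : Fin g) (n : ℤ) : relatorProd (twistA i n) = 1 := by
  refine (relatorProd_eq_of_handle (i := i) (fun x hx => ?_) ?_).trans relatorProd_of
  · exact Function.update_of_ne (by rintro rfl; exact hx rfl) _ _
  · simp [twistA, commutatorElement_def]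
    group

lemma lift_twistA_twistA_neg (i : Fin g) (n : ℤ) (x : Fin g × Bool) :
    lift (twistA i (-n)) (relatorProd_twistA i (-n)) (twistA i n x) = of x := by
  rcases eq_or_ne x (i, true) with rfl | hx
  · simp [twistA]
  · simp [twistA, hx]

def twistAEquiv (i : Fin g) : SurfaceGroup g ≃* SurfaceGroup g :=
  liftEquiv (twistA i 1) (twistA i (-1)) (relatorProd_twistA i 1) (relatorProd_twistA i (-1))
    (lift_twistA_twistA_neg i 1) (by simpa only [neg_neg] using lift_twistA_twistA_neg i (-1))

def twistB (i : Fin g) (n : ℤ) : Fin g × Bool → SurfaceGroup g :=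
  update of (i, false) (bgen i * agen i ^ n)

lemma relatorProd_twistB (i : Fin g) (n : ℤ) : relatorProd (twistB i n) = 1 := by
  refine (relatorProd_eq_of_handle (i := i) (fun x hx => ?_) ?_).trans relatorProd_of
  · exact Function.update_of_ne (by rintro rfl; exact hx rfl) _ _
  · simp [twistB, commutatorElement_def]
    group

lemma lift_twistB_twistB_neg (i : Fin g) (n : ℤ) (x : Fin g × Bool) :
    lift (twistB i (-n)) (relatorProd_twistB i (-n)) (twistB i n x) = of x := by
  rcases eq_or_ne x (i, false) with rfl | hx
  · simp [twistB]
  · simp [twistB, hx]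

def twistBEquiv (i : Fin g) : SurfaceGroup g ≃* SurfaceGroup g :=
  liftEquiv (twistB i 1) (twistB i (-1)) (relatorProd_twistB i 1) (relatorProd_twistB i (-1))
    (lift_twistB_twistB_neg i 1) (by simpa only [neg_neg] using lift_twistB_twistB_neg i (-1))

def mix (i j : Fin g) : Fin g × Bool → SurfaceGroup g :=
  update (update of
    (i, false) (bgen i * (agen i)⁻¹ * (bgen i)⁻¹ * agen j * bgen j * (agen j)⁻¹ * bgen i))
    (j, true) (bgen i * (agen i)⁻¹ * (bgen i)⁻¹ * agen j)

def mixInv (i j : Fin g) : Fin g × Bool → SurfaceGroup g :=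
  update (update of
    (i, false) (agen j * (bgen j)⁻¹ * (agen j)⁻¹ * bgen i * agen i))
    (j, true) (agen j * (bgen j)⁻¹ * (agen j)⁻¹ * bgen i * agen i * (bgen i)⁻¹ * agen j * bgen j)

variable {i j : Fin g}

lemma relatorProd_mix (hij : i.val + 1 = j.val) : relatorProd (mix i j) = 1 := by
  have hne := Fin.ne_of_val_add_one_eq hij
  refine (relatorProd_eq_of_adjacent hij (fun x hi hj => ?_) ?_).trans relatorProd_of
  · simp [mix, Prod.ext_iff, hi, hj]
  · simp [mix, hne, hne.symm, commutatorElement_def]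
    group

lemma relatorProd_mixInv (hij : i.val + 1 = j.val) : relatorProd (mixInv i j) = 1 := by
  have hne := Fin.ne_of_val_add_one_eq hij
  refine (relatorProd_eq_of_adjacent hij (fun x hi hj => ?_) ?_).trans relatorProd_of
  · simp [mixInv, Prod.ext_iff, hi, hj]
  · simp [mixInv, hne, hne.symm, commutatorElement_def]
    group

lemma lift_mixInv_mix (hij : i.val + 1 = j.val) (x : Fin g × Bool) :
    lift (mixInv i j) (relatorProd_mixInv hij) (mix i j x) = of x := by
  have hne := Fin.ne_of_val_add_one_eq hij
  rcases eq_or_ne x (j, true) with rfl | hxj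
  · simp [mix, mixInv, hne]
    group
  rcases eq_or_ne x (i, false) with rfl | hxi
  · simp [mix, mixInv, hne, hne.symm]
    group
  simp [mix, mixInv, hxi, hxj]

lemma lift_mix_mixInv (hij : i.val + 1 = j.val) (x : Fin g × Bool) :
    lift (mix i j) (relatorProd_mix hij) (mixInv i j x) = of x := by
  have hne := Fin.ne_of_val_add_one_eq hij
  rcases eq_or_ne x (j, true) with rfl | hxj
  · simp [mix, mixInv, hne, hne.symm]
    group
  rcases eq_or_ne x (i, false) with rfl | hxi
  · simp [mix, mixInv, hne, hne.symm]
    group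
  simp [mix, mixInv, hxi, hxj]

def mixEquiv (hij : i.val + 1 = j.val) : SurfaceGroup g ≃* SurfaceGroup g :=
  liftEquiv (mix i j) (mixInv i j) (relatorProd_mix hij) (relatorProd_mixInv hij)
    (lift_mixInv_mix hij) (lift_mix_mixInv hij)

end SurfaceGroup

abbrev HandleVector (g : ℕ) := Fin g → ZMod 2 × ZMod 2

namespace HandleVector

variable {g : ℕ} {i j : Fin g} {v : HandleVector g}

def twistA (i : Fin g) (v : HandleVector g) : HandleVector g :=
  update v i ((v i).1 + (v i).2, (v i).2)

def twistB (i : Fin g) (v : HandleVector g) : HandleVector g :=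
  update v i ((v i).1, (v i).2 + (v i).1)

def mix (i j : Fin g) (v : HandleVector g) : HandleVector g :=
  update (update v i ((v i).1, (v i).2 + ((v i).1 + (v j).2))) j ((v j).1 + (v i).1, (v j).2)

inductive Move : HandleVector g → HandleVector g → Prop
  | twistA (i : Fin g) (v : HandleVector g) : Move v (twistA i v)
  | twistB (i : Fin g) (v : HandleVector g) : Move v (twistB i v)
  | mix {i j : Fin g} (hij : i.val + 1 = j.val) (v : HandleVector g) : Move v (mix i j v)

abbrev Reach : HandleVector g → HandleVector g → Prop := Relation.ReflTransGen Move

lemma twistA_twistA (i : Fin g) (v : HandleVector g) : twistA i (twistA i v) = v := by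
  simp [twistA, CharTwo.add_cancel_right]

lemma twistB_twistB (i : Fin g) (v : HandleVector g) : twistB i (twistB i v) = v := by
  simp [twistB, CharTwo.add_cancel_right]

lemma mix_mix (hij : i ≠ j) (v : HandleVector g) : mix i j (mix i j v) = v := by
  funext k
  rcases eq_or_ne k j with rfl | hkj
  · simp [mix, hij, CharTwo.add_cancel_right]
  rcases eq_or_ne k i with rfl | hki
  · simp [mix, hkj, CharTwo.add_cancel_right]
  · simp [mix, hki, hkj]

lemma Move.symm {v w : HandleVector g} (h : Move v w) : Move w v := by
  cases h with
  | twistA i v => simpa only [twistA_twistA] using Move.twistA i (HandleVector.twistA i v)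
  | twistB i v => simpa only [twistB_twistB] using Move.twistB i (HandleVector.twistB i v)
  | @mix i j hij v =>
    simpa only [mix_mix (Fin.ne_of_val_add_one_eq hij)] using
      Move.mix hij (HandleVector.mix i j v)

lemma Reach.symm {v w : HandleVector g} (h : Reach v w) : Reach w v := by
  induction h with
  | refl => rfl
  | tail _ hm ih => exact ih.head hm.symm

lemma reach_update_one_zero (v : HandleVector g) (i : Fin g) {p : ZMod 2 × ZMod 2}
    (hp : p ≠ 0) : Reach (update v i p) (update v i (1, 0)) := by
  have hB : Move (update v i (1, 1)) (update v i (1, 0)) := by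
    simpa [twistB, CharTwo.add_self_eq_zero] using Move.twistB i (update v i (1, 1))
  obtain rfl | rfl | rfl : p = (1, 0) ∨ p = (0, 1) ∨ p = (1, 1) := by revert p; decide
  · rfl
  · have hA : Move (update v i (0, 1)) (update v i (1, 1)) := by
      simpa [twistA] using Move.twistA i (update v i (0, 1))
    exact .head hA (.single hB)
  · exact .single hB

lemma reach_update (hv : v i ≠ 0) {q : ZMod 2 × ZMod 2} (hq : q ≠ 0) :
    Reach v (update v i q) := by
  simpa using (reach_update_one_zero v i hv).trans (reach_update_one_zero v i hq).symm

lemma reach_clear_of_ne_zero (hij : i.val + 1 = j.val) (hi : v i ≠ 0) (hj : v j ≠ 0) :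
    Reach v (update (update v j 0) i (1, 0)) := by
  have hne := Fin.ne_of_val_add_one_eq hij
  have hmix : Move (update (update v i (1, 0)) j (1, 0)) (update (update v i (1, 1)) j 0) := by
    simpa [mix, hne, hne.symm, Function.update_comm hne.symm, CharTwo.add_self_eq_zero,
      Prod.mk_zero_zero] using Move.mix hij (update (update v i (1, 0)) j (1, 0))
  calc Reach v (update v i (1, 0)) := reach_update hi (by decide)
    Reach _ (update (update v i (1, 0)) j (1, 0)) :=
      reach_update (by simpa [hne.symm]) (by decide)
    Move _ (update (update v i (1, 1)) j 0) := hmix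
    Reach _ (update (update v j 0) i (1, 0)) := by
      simpa [Function.update_comm hne.symm] using
        reach_update (v := update (update v i (1, 1)) j 0) (i := i) (by simp [hne])
          (by decide : ((1, 0) : ZMod 2 × ZMod 2) ≠ 0)

lemma reach_clear (hij : i.val + 1 = j.val) (hj : v j ≠ 0) :
    Reach v (update (update v j 0) i (1, 0)) := by
  by_cases hi : v i = 0
  swap
  · exact reach_clear_of_ne_zero hij hi hj
  have hne := Fin.ne_of_val_add_one_eq hij
  have hmix : Move (update v j (0, 1)) (update (update v i (0, 1)) j (0, 1)) := by
    simpa [mix, hne, hne.symm, hi, Function.update_comm hne.symm] using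
      Move.mix hij (update v j (0, 1))
  calc Reach v (update v j (0, 1)) := reach_update hj (by decide)
    Move _ (update (update v i (0, 1)) j (0, 1)) := hmix
    Reach _ (update (update v j 0) i (1, 0)) := by
      simpa [Function.update_comm hne.symm] using
        reach_clear_of_ne_zero (v := update (update v i (0, 1)) j (0, 1)) hij
          (by simp [hne]) (by simp)

lemma reach_single_of_eq_zero_off {i₀ : Fin g} (hoff : ∀ k, k ≠ i₀ → v k = 0) (hv : v ≠ 0) :
    Reach v (Pi.single i₀ (1, 0)) := by
  have hvi₀ : v i₀ ≠ 0 := fun h => hv <| funext fun k => by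
    rcases eq_or_ne k i₀ with rfl | hk
    exacts [h, hoff k hk]
  have htarget : update v i₀ (1, 0) = Pi.single i₀ (1, 0) := by
    funext k
    rcases eq_or_ne k i₀ with rfl | hk
    · simp
    · simp [hk, hoff k hk]
  exact htarget ▸ reach_update hvi₀ (by decide)

lemma reach_single_of_eq_zero_above {i₀ : Fin g} (hi₀ : i₀.val = 0) {n : ℕ}
    (hn : ∀ k : Fin g, n < k.val → v k = 0) (hv : v ≠ 0) : Reach v (Pi.single i₀ (1, 0)) := by
  induction n generalizing v with
  | zero => exact reach_single_of_eq_zero_off (fun k hk => hn k (by grind [Fin.val_ne_of_ne])) hv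
  | succ n ih =>
    by_cases htop : ∃ j : Fin g, j.val = n + 1 ∧ v j ≠ 0
    · obtain ⟨j, hj, hvj⟩ := htop
      let i : Fin g := ⟨n, by omega⟩
      refine (reach_clear (i := i) (by simp [i, hj]) hvj).trans (ih (fun k hk => ?_) ?_)
      · have hki : k ≠ i := Fin.ne_of_val_ne (by simp [i]; omega)
        rcases eq_or_ne k j with rfl | hkj
        · simp [hki]
        · simp [hki, hkj, hn k (by have := Fin.val_ne_of_ne hkj; omega)]
      · exact fun h => by simpa using congrFun h i
    · refine ih (fun k hk => ?_) hv
      rcases eq_or_ne k.val (n + 1) with hk' | hk'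
      · by_contra hvk
        exact htop ⟨k, hk', hvk⟩
      · exact hn k (by omega)

lemma reach_single {i₀ : Fin g} (hi₀ : i₀.val = 0) (hv : v ≠ 0) :
    Reach v (Pi.single i₀ (1, 0)) :=
  reach_single_of_eq_zero_above hi₀ (n := g) (fun k hk => absurd k.isLt (by omega)) hv

end HandleVector

namespace SurfaceGroup

open Multiplicative

variable {g : ℕ} (ε : SurfaceGroup g →* Multiplicative (ZMod 2))

def handleValues : HandleVector g := fun k => (toAdd (ε (agen k)), toAdd (ε (bgen k)))

lemma handleValues_comp_twistAEquiv (i : Fin g) :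
    handleValues (ε.comp (twistAEquiv i).toMonoidHom) = (handleValues ε).twistA i := by
  funext k
  rcases eq_or_ne k i with rfl | hk
  · simp [handleValues, twistAEquiv, twistA, HandleVector.twistA]
  · simp [handleValues, twistAEquiv, twistA, HandleVector.twistA, hk]

lemma handleValues_comp_twistBEquiv (i : Fin g) :
    handleValues (ε.comp (twistBEquiv i).toMonoidHom) = (handleValues ε).twistB i := by
  funext k
  rcases eq_or_ne k i with rfl | hk
  · simp [handleValues, twistBEquiv, twistB, HandleVector.twistB]
  · simp [handleValues, twistBEquiv, twistB, HandleVector.twistB, hk]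

lemma handleValues_comp_mixEquiv {i j : Fin g} (hij : i.val + 1 = j.val) :
    handleValues (ε.comp (mixEquiv hij).toMonoidHom) = (handleValues ε).mix i j := by
  have hne := Fin.ne_of_val_add_one_eq hij
  funext k
  rcases eq_or_ne k j with rfl | hkj
  · simp [handleValues, mixEquiv, mix, HandleVector.mix, hne.symm, add_comm]
  rcases eq_or_ne k i with rfl | hki
  · simp [handleValues, mixEquiv, mix, HandleVector.mix, hkj]
    grind
  · simp [handleValues, mixEquiv, mix, HandleVector.mix, hki, hkj]

lemma exists_mulEquiv_handleValues_eq {w : HandleVector g}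
    (h : HandleVector.Reach (handleValues ε) w) :
    ∃ θ : SurfaceGroup g ≃* SurfaceGroup g, handleValues (ε.comp θ.toMonoidHom) = w := by
  induction h with
  | refl => exact ⟨MulEquiv.refl _, rfl⟩
  | tail _ hm ih =>
    obtain ⟨θ, hθ⟩ := ih
    cases hm with
    | twistA i v =>
      exact ⟨(twistAEquiv i).trans θ, hθ ▸ handleValues_comp_twistAEquiv (ε.comp θ.toMonoidHom) i⟩
    | twistB i v =>
      exact ⟨(twistBEquiv i).trans θ, hθ ▸ handleValues_comp_twistBEquiv (ε.comp θ.toMonoidHom) i⟩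
    | mix hij v =>
      exact ⟨(mixEquiv hij).trans θ, hθ ▸ handleValues_comp_mixEquiv (ε.comp θ.toMonoidHom) hij⟩

lemma handleValues_ne_zero (hε : Function.Surjective ε) : handleValues ε ≠ 0 := by
  intro h
  have hε1 : ε = 1 := hom_ext fun ⟨k, b⟩ => by
    have hk := congrFun h k
    cases b
    · simpa [handleValues] using congrArg Prod.snd hk
    · simpa [handleValues] using congrArg Prod.fst hk
  obtain ⟨x, hx⟩ := hε (ofAdd 1)
  rw [hε1, MonoidHom.one_apply] at hx
  exact absurd hx (by decide)

end SurfaceGroup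

/-- Any epimorphism from a surface group onto `ℤ/2ℤ` admits, after an automorphism of
the surface group, a normalized form: it takes the value `1` on the handle generator
`a₁` and the value `0` on all other standard generators. -/
theorem epi_zmod_two_normalized_basis (g : ℕ) (hg : 2 ≤ g)
    (ε : SurfaceGroup g →* Multiplicative (ZMod 2))
    (hε : Function.Surjective ε) :
    ∃ θ : SurfaceGroup g ≃* SurfaceGroup g,
      ε (θ (agen (⟨0, by omega⟩ : Fin g))) = Multiplicative.ofAdd (1 : ZMod 2) ∧
      ε (θ (bgen (⟨0, by omega⟩ : Fin g))) = Multiplicative.ofAdd (0 : ZMod 2) ∧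
      ∀ i : Fin g, i ≠ (⟨0, by omega⟩ : Fin g) →
        ε (θ (agen i)) = Multiplicative.ofAdd (0 : ZMod 2) ∧
        ε (θ (bgen i)) = Multiplicative.ofAdd (0 : ZMod 2) := by
  set i₀ : Fin g := ⟨0, by omega⟩
  obtain ⟨θ, hθ⟩ := SurfaceGroup.exists_mulEquiv_handleValues_eq ε <|
    HandleVector.reach_single (i₀ := i₀) rfl (SurfaceGroup.handleValues_ne_zero ε hε)
  have ha (k : Fin g) :
      ε (θ (agen k)) = .ofAdd (SurfaceGroup.handleValues (ε.comp θ.toMonoidHom) k).1 := rfl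
  have hb (k : Fin g) :
      ε (θ (bgen k)) = .ofAdd (SurfaceGroup.handleValues (ε.comp θ.toMonoidHom) k).2 := rfl
  refine ⟨θ, ?_, ?_, fun i hi => ?_⟩ <;> simp only [ha, hb, hθ]
  · simp
  · simp
  · simp [hi]
end

section
/- Let Γ be a discrete subgroup of SL(2,ℝ). Then every element A ∈ Γ that fixes some point of the upper half-plane ℍ has finite order. -/
open Matrix UpperHalfPlane
open scoped MatrixGroups

/-- The subspace topology on `SL(2, ℝ)` induced from the space of 2×2 real matrices. -/
noncomputable instance : TopologicalSpace (Matrix.SpecialLinearGroup (Fin 2) ℝ) :=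
  TopologicalSpace.induced (fun A => (A : Matrix (Fin 2) (Fin 2) ℝ)) inferInstance

/-!
The action of `SL(2, ℝ)` on `ℍ` is proper, so a discrete subgroup `Γ` acts properly
discontinuously. Hence the stabilizer in `Γ` of any point is finite, and an element of a finite
group has finite order.
-/

theorem ProperlyDiscontinuousSMul.isOfFinOrder_of_smul_eq_self {G T : Type*} [Group G]
    [TopologicalSpace T] [MulAction G T] [ProperlyDiscontinuousSMul G T] {g : G} {x : T}
    (hg : g • x = x) : IsOfFinOrder g :=
  have : Finite (MulAction.stabilizer G x) := (finite_stabilizer x).to_subtype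
  (MulAction.stabilizer G x).subtype.isOfFinOrder
    (isOfFinOrder_of_finite (⟨g, hg⟩ : MulAction.stabilizer G x))

/-- Every element of a discrete subgroup of `SL(2, ℝ)` which fixes a point of the
upper half-plane has finite order. -/
theorem finite_order_of_fixes_point_of_discrete
    (Γ : Subgroup SL(2, ℝ)) (hΓ : DiscreteTopology Γ)
    (A : SL(2, ℝ)) (hA : A ∈ Γ) (hfix : ∃ z : ℍ, A • z = z) :
    IsOfFinOrder A := by
  obtain ⟨z, hz⟩ := hfix
  -- The topology above is definitionally Mathlib's subtype topology on `SL(2, ℝ)`, but instance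
  -- search does not see through it, so `hΓ` is passed by hand.
  have : ProperlyDiscontinuousSMul Γ ℍ := @instProperlyDiscontinuousSL2RSubgroup Γ hΓ
  exact Γ.subtype.isOfFinOrder
    (ProperlyDiscontinuousSMul.isOfFinOrder_of_smul_eq_self (g := (⟨A, hA⟩ : Γ)) hz)
end

section
/- (Selberg's Lemma) Let n ≥ 1 and let Γ be a finitely generated subgroup of the general linear group GL(n, ℂ). Then there exists a subgroup Δ ≤ Γ of finite index in Γ that is torsion-free, i.e. every element of Δ other than the identity has infinite order. -/
/-!
The entries of a finite generating set of `Γ` and of their inverses generate a finitely generated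
ring `A ⊆ ℂ` with `Γ ⊆ GL_n(A)`. Since `ℤ` is a Jacobson ring, so is `A`, and its residue fields
at maximal ideals are finite; hence every congruence subgroup `Γ(m) = ker (GL_n(A) → GL_n(A/m))`
has finite index. If `g ∈ Γ(m)` and `g ^ q = 1` with `q ∉ m`, then `S = 1 + g + ⋯ + g^(q-1)`
satisfies `S * (g - 1) = 0` and `S ≡ q` modulo `m`, so `det S ≠ 0` and `g = 1`: every element of
prime order in `Γ(m)` has order the residue characteristic of `m`. As `A` has characteristic zero
and is Jacobson, it has two maximal ideals `m₁, m₂` of different residue characteristics, and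
`Γ(m₁) ∩ Γ(m₂)` is torsion-free.
-/

instance Int.isJacobsonRing : IsJacobsonRing ℤ := by
  rw [isJacobsonRing_iff_prime_eq]
  intro P hP
  rcases eq_or_ne P ⊥ with rfl | hP₀
  · refine eq_bot_iff.mpr fun x hx => Ideal.mem_bot.mpr ?_
    obtain ⟨p, hxp, hp⟩ := Nat.exists_infinite_primes (x.natAbs + 1)
    have hmax : (Ideal.span {(p : ℤ)}).IsMaximal :=
      PrincipalIdealRing.isMaximal_of_irreducible (Nat.prime_iff_prime_int.mp hp).irreducible
    have hpx : (p : ℤ) ∣ x := Ideal.mem_span_singleton.mp (Ideal.mem_sInf.mp hx ⟨bot_le, hmax⟩)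
    by_contra hx₀
    have := Nat.le_of_dvd (by simpa using hx₀) (Int.natCast_dvd.mp hpx)
    omega
  · have := hP.isMaximal hP₀
    exact Ideal.jacobson_eq_self_of_isMaximal

theorem Field.finite_of_moduleFinite_int (K : Type*) [Field K] [Module.Finite ℤ K] : Finite K := by
  obtain ⟨p, hp⟩ := CharP.exists K
  rcases CharP.char_is_prime_or_zero K p with hp' | rfl
  · have := Fact.mk hp'
    let := ZMod.algebra K p
    have : Module.Finite (ZMod p) K := Module.Finite.of_restrictScalars_finite ℤ (ZMod p) K
    exact Module.finite_of_finite (ZMod p)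
  · have : CharZero K := CharP.charP_to_charZero K
    exact (Int.not_isField ((Algebra.IsIntegral.isField_iff_isField
      (algebraMap ℤ K).injective_int).mpr (Field.toIsField K))).elim

namespace Ideal

variable {A : Type*} [CommRing A]

theorem finite_quotient_of_finiteType_int [Algebra.FiniteType ℤ A] (m : Ideal A) [m.IsMaximal] :
    Finite (A ⧸ m) := by
  have := Algebra.FiniteType.of_surjective _ (Quotient.mkₐ_surjective ℤ m)
  let := Quotient.field m
  have := finite_of_finite_type_of_isJacobsonRing ℤ (A ⧸ m)
  exact Field.finite_of_moduleFinite_int (A ⧸ m)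

theorem exists_prime_natCast_mem (m : Ideal A) [m.IsMaximal] [Finite (A ⧸ m)] :
    ∃ p : ℕ, p.Prime ∧ (p : A) ∈ m := by
  let := Quotient.field m
  obtain ⟨p, hp⟩ := CharP.exists (A ⧸ m)
  refine ⟨p, CharP.char_is_prime (A ⧸ m) p, ?_⟩
  rw [← Quotient.eq_zero_iff_mem, map_natCast, CharP.cast_eq_zero]

theorem eq_of_prime_natCast_mem {m : Ideal A} (hm : m ≠ ⊤) {p q : ℕ} (hp : p.Prime)
    (hq : q.Prime) (hpm : (p : A) ∈ m) (hqm : (q : A) ∈ m) : p = q := by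
  by_contra hpq
  obtain ⟨a, b, hab⟩ := Nat.isCoprime_iff_coprime.mpr ((Nat.coprime_primes hp hq).mpr hpq)
  apply hm
  rw [eq_top_iff_one, ← map_one (Int.castRingHom A), ← hab]
  simpa using add_mem (m.mul_mem_left a hpm) (m.mul_mem_left b hqm)

theorem exists_isMaximal_notMem_of_ne_zero [IsDomain A] [IsJacobsonRing A] {a : A}
    (ha : a ≠ 0) : ∃ m : Ideal A, m.IsMaximal ∧ a ∉ m := by
  have hjac : (⊥ : Ideal A).jacobson = ⊥ := IsJacobsonRing.out' ⊥ isRadical_bot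
  by_contra! h
  have : a ∈ (⊥ : Ideal A).jacobson := mem_sInf.mpr fun m hm => h m hm.2
  exact ha (by rwa [hjac, mem_bot] at this)

theorem exists_isMaximal_pair_no_common_prime [IsDomain A] [CharZero A]
    [Algebra.FiniteType ℤ A] :
    ∃ m₁ m₂ : Ideal A, m₁.IsMaximal ∧ m₂.IsMaximal ∧
      ∀ q : ℕ, q.Prime → (q : A) ∉ m₁ ∨ (q : A) ∉ m₂ := by
  have : IsJacobsonRing A := isJacobsonRing_of_finiteType (A := ℤ)
  obtain ⟨m₁, hm₁⟩ := exists_maximal A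
  have := m₁.finite_quotient_of_finiteType_int
  obtain ⟨p, hp, hpm₁⟩ := m₁.exists_prime_natCast_mem
  obtain ⟨m₂, hm₂, hpm₂⟩ :=
    exists_isMaximal_notMem_of_ne_zero (Nat.cast_ne_zero.mpr hp.ne_zero : (p : A) ≠ 0)
  refine ⟨m₁, m₂, hm₁, hm₂, fun q hq => not_and_or.mp fun ⟨hqm₁, hqm₂⟩ => hpm₂ ?_⟩
  rwa [eq_of_prime_natCast_mem hm₁.ne_top hp hq hpm₁ hqm₁]

end Ideal

theorem Subgroup.isFiniteRelIndex_map_of_le_range {G G' : Type*} [Group G] [Group G']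
    (f : G →* G') (H : Subgroup G) [H.FiniteIndex] {K : Subgroup G'} (hK : K ≤ f.range) :
    (H.map f).IsFiniteRelIndex K := by
  have : (H.map f).IsFiniteRelIndex ((⊤ : Subgroup G).map f) := by
    rw [isFiniteRelIndex_iff_relIndex_ne_zero, relIndex_map_map, top_sup_eq, relIndex_top_right]
    exact (finiteIndex_of_le le_sup_left).index_ne_zero
  exact isFiniteRelIndex_of_le_right _ (f.range_eq_map ▸ hK)

theorem Matrix.eq_one_of_pow_eq_one_of_map_eq_one {n A K : Type*} [Fintype n] [DecidableEq n]
    [CommRing A] [IsDomain A] [CommRing K] [IsDomain K] (π : A →+* K) {g : Matrix n n A} {q : ℕ}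
    (hq : (q : K) ≠ 0) (hgq : g ^ q = 1) (hg : π.mapMatrix g = 1) : g = 1 := by
  set S := ∑ i ∈ Finset.range q, g ^ i
  have hS : S * (g - 1) = 0 := by rw [geom_sum_mul, hgq, sub_self]
  have hπS : π.mapMatrix S = q := by simp [S, map_sum, map_pow, hg]
  have hdet : S.det ≠ 0 := by
    intro h
    have := congrArg π h
    rw [RingHom.map_det, hπS, map_zero, ← diagonal_natCast', det_diagonal] at this
    simp [hq] at this
  have hreg : IsLeftRegular S :=
    (isRegular_of_isLeftRegular_det (IsRegular.of_ne_zero hdet).left).left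
  exact sub_eq_zero.mp (hreg (hS.trans (mul_zero S).symm))

namespace Matrix.GeneralLinearGroup

variable {n : Type*} [Fintype n] [DecidableEq n]

theorem map_injective {R S : Type*} [CommRing R] [CommRing S] {f : R →+* S}
    (hf : Function.Injective f) : Function.Injective (map (n := n) f) :=
  fun _ _ h => Units.ext (Matrix.map_injective hf (congrArg Units.val h))

theorem mem_range_map_algebraMap {R S : Type*} [CommRing R] [CommRing S] [Algebra R S]
    (A : Subalgebra R S) (g : GL n S) (hg : ∀ i j, (g : Matrix n n S) i j ∈ A)
    (hg' : ∀ i j, (↑g⁻¹ : Matrix n n S) i j ∈ A) : g ∈ (map (algebraMap A S)).range := by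
  have hinj : Function.Injective ((algebraMap A S).mapMatrix : Matrix n n A →+* _) :=
    Matrix.map_injective Subtype.val_injective
  let M : Matrix n n A := .of fun i j => ⟨_, hg i j⟩
  let N : Matrix n n A := .of fun i j => ⟨_, hg' i j⟩
  have hM : (algebraMap A S).mapMatrix M = g := rfl
  have hN : (algebraMap A S).mapMatrix N = ↑g⁻¹ := rfl
  refine ⟨⟨M, N, hinj ?_, hinj ?_⟩, Units.ext rfl⟩ <;> rw [map_mul, map_one, hM, hN]
  exacts [g.mul_inv, g.inv_mul]

theorem exists_fg_subalgebra_le_range_map {R : Type*} [CommRing R] (Γ : Subgroup (GL n R))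
    (hΓ : Γ.FG) : ∃ A : Subalgebra ℤ R, A.FG ∧ Γ ≤ (map (algebraMap A R)).range := by
  obtain ⟨S, rfl, hSfin⟩ := (Subgroup.fg_iff Γ).mp hΓ
  let E : Set R := ⋃ g ∈ S, (Set.range fun p : n × n => (g : Matrix n n R) p.1 p.2) ∪
    Set.range fun p : n × n => (↑g⁻¹ : Matrix n n R) p.1 p.2
  have hE : E.Finite := hSfin.biUnion fun _ _ => (Set.finite_range _).union (Set.finite_range _)
  refine ⟨Algebra.adjoin ℤ E, Subalgebra.fg_def.mpr ⟨E, hE, rfl⟩,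
    (Subgroup.closure_le _).mpr fun g hg => ?_⟩
  exact mem_range_map_algebraMap _ g
    (fun i j => Algebra.subset_adjoin (Set.mem_biUnion hg (Or.inl ⟨(i, j), rfl⟩)))
    (fun i j => Algebra.subset_adjoin (Set.mem_biUnion hg (Or.inr ⟨(i, j), rfl⟩)))

variable {A : Type*} [CommRing A]

variable (n) in
def congruenceSubgroup (m : Ideal A) : Subgroup (GL n A) :=
  (map (Ideal.Quotient.mk m)).ker

instance (m : Ideal A) [Finite (A ⧸ m)] : (congruenceSubgroup n m).FiniteIndex :=
  Subgroup.finiteIndex_ker _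

theorem eq_one_of_mem_congruenceSubgroup_of_pow_eq_one [IsDomain A] {m : Ideal A} [m.IsPrime]
    {g : GL n A} (hg : g ∈ congruenceSubgroup n m) {q : ℕ} (hq : (q : A) ∉ m)
    (hgq : g ^ q = 1) : g = 1 := by
  refine Units.ext (Matrix.eq_one_of_pow_eq_one_of_map_eq_one (Ideal.Quotient.mk m) ?_
    (by simpa using congrArg Units.val hgq) (congrArg Units.val hg))
  rwa [← map_natCast (Ideal.Quotient.mk m), ne_eq, Ideal.Quotient.eq_zero_iff_mem]

theorem exists_finiteIndex_forall_isOfFinOrder_eq_one [IsDomain A] [CharZero A]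
    [Algebra.FiniteType ℤ A] :
    ∃ Δ : Subgroup (GL n A), Δ.FiniteIndex ∧ ∀ g ∈ Δ, IsOfFinOrder g → g = 1 := by
  obtain ⟨m₁, m₂, hm₁, hm₂, hm₁₂⟩ := Ideal.exists_isMaximal_pair_no_common_prime (A := A)
  have := m₁.finite_quotient_of_finiteType_int
  have := m₂.finite_quotient_of_finiteType_int
  refine ⟨congruenceSubgroup n m₁ ⊓ congruenceSubgroup n m₂, inferInstance, fun g hg hgfin => ?_⟩
  by_contra hg₁
  obtain ⟨q, hq, hqg⟩ := Nat.exists_prime_and_dvd (orderOf_eq_one_iff.not.mpr hg₁)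
  set w := g ^ (orderOf g / q)
  have hw : orderOf w = q := orderOf_pow_orderOf_div hgfin.orderOf_pos.ne' hqg
  have hw₁ : w ≠ 1 := fun h => hq.one_lt.ne' (by rw [← hw, h, orderOf_one])
  have hwq : w ^ q = 1 := hw ▸ pow_orderOf_eq_one w
  rcases hm₁₂ q hq with hqm | hqm
  · exact hw₁ (eq_one_of_mem_congruenceSubgroup_of_pow_eq_one (pow_mem hg.1 _) hqm hwq)
  · exact hw₁ (eq_one_of_mem_congruenceSubgroup_of_pow_eq_one (pow_mem hg.2 _) hqm hwq)

end Matrix.GeneralLinearGroup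

theorem selberg_lemma_general (n : ℕ)
    (Γ : Subgroup (Matrix.GeneralLinearGroup (Fin n) ℂ)) (hΓ : Γ.FG) :
    ∃ Δ : Subgroup (Matrix.GeneralLinearGroup (Fin n) ℂ), Δ ≤ Γ ∧
      (Δ.subgroupOf Γ).FiniteIndex ∧
      ∀ x ∈ Δ, x ≠ 1 → ¬ IsOfFinOrder x := by
  obtain ⟨A, hAfg, hΓA⟩ := Matrix.GeneralLinearGroup.exists_fg_subalgebra_le_range_map Γ hΓ
  have : Algebra.FiniteType ℤ A := (Subalgebra.fg_iff_finiteType A).mp hAfg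
  obtain ⟨Δ, hΔ, hΔ_torsionFree⟩ :=
    Matrix.GeneralLinearGroup.exists_finiteIndex_forall_isOfFinOrder_eq_one (n := Fin n) (A := A)
  set φ := Matrix.GeneralLinearGroup.map (n := Fin n) (algebraMap A ℂ)
  have hφ : Function.Injective φ := Matrix.GeneralLinearGroup.map_injective Subtype.val_injective
  have := Subgroup.isFiniteRelIndex_map_of_le_range φ Δ hΓA
  refine ⟨Δ.map φ ⊓ Γ, inf_le_right, ?_, ?_⟩
  · rw [Subgroup.inf_subgroupOf_right]
    infer_instance
  · rintro _ ⟨⟨g, hg, rfl⟩, -⟩ hg₁ hgfin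
    exact hg₁ (by rw [hΔ_torsionFree g hg (hφ.isOfFinOrder_iff.mp hgfin), map_one])

/-- Selberg's Lemma: a finitely generated subgroup of `GL(n, ℂ)` contains a
torsion-free subgroup of finite index. -/
theorem selberg_lemma (n : ℕ) (hn : 1 ≤ n)
    (Γ : Subgroup (Matrix.GeneralLinearGroup (Fin n) ℂ)) (hΓ : Γ.FG) :
    ∃ Δ : Subgroup (Matrix.GeneralLinearGroup (Fin n) ℂ), Δ ≤ Γ ∧
      (Δ.subgroupOf Γ).FiniteIndex ∧
      ∀ x ∈ Δ, x ≠ 1 → ¬ IsOfFinOrder x :=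
  selberg_lemma_general n Γ hΓ
end

section
/- Let Γ be an elementary discrete subgroup of SL(2,ℝ). Then Γ cannot contain both a parabolic element (an element B ≠ ±1 with |tr B| = 2) and a hyperbolic element (an element A with |tr A| > 2). -/
open Matrix UpperHalfPlane
open scoped MatrixGroups

/-- The real projective line `ℝP¹`. -/
abbrev RP1 := Projectivization ℝ (Fin 2 → ℝ)

/-- The action of `SL(2, ℝ)` on `ℝP¹` induced by its linear action on `ℝ²`. -/
noncomputable def projAct (A : SL(2, ℝ)) (x : RP1) : RP1 :=
  Projectivization.map (Matrix.SpecialLinearGroup.toLin' A).toLinearMap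
    (Matrix.SpecialLinearGroup.toLin' A).injective x

/-- A subgroup of `SL(2, ℝ)` is elementary if it has a finite orbit in `ℍ`
or a finite orbit in `ℝP¹`. -/
def IsElementary (Γ : Subgroup SL(2, ℝ)) : Prop :=
  (∃ z : ℍ, {w : ℍ | ∃ γ ∈ Γ, γ • z = w}.Finite) ∨
  (∃ x : RP1, {y : RP1 | ∃ γ ∈ Γ, projAct γ x = y}.Finite)

/-! A power of a parabolic element is parabolic, and parabolic elements of `SL(2, ℝ)` fix no
point of `ℍ`; so a finite orbit in `ℍ` is impossible. If instead the orbit of `x ∈ ℝP¹` is finite,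
some powers `Bⁿ` (parabolic) and `Aᵐ` (still hyperbolic: `|tr Aᵏ|` increases with `k` by the
recursion `tr Aᵏ⁺² = tr A · tr Aᵏ⁺¹ - tr Aᵏ`) both fix `x`. Moving `x` to `[1 : 0]`, they become
upper triangular: `B²ⁿ` is a nontrivial translation `z ↦ z + s`, and `Aᵐ` or `A⁻ᵐ` has
`|a| < 1` in its upper-left corner. Conjugating `B²ⁿ` by the `k`-th power of the latter gives the
translation by `a²ᵏ s`, a sequence of elements of `Γ \ {1}` tending to `1`. -/

open Filter Topology

namespace Matrix

variable {R : Type*} [CommRing R]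

theorem sq_eq_trace_smul_sub_det_smul (M : Matrix (Fin 2) (Fin 2) R) :
    M ^ 2 = M.trace • M - M.det • 1 := by
  ext i j
  fin_cases i <;> fin_cases j <;>
    simp [sq, mul_apply, trace_fin_two, det_fin_two, Fin.sum_univ_two] <;> ring

theorem trace_pow_add_two {M : Matrix (Fin 2) (Fin 2) R} (hM : M.det = 1) (n : ℕ) :
    (M ^ (n + 2)).trace = M.trace * (M ^ (n + 1)).trace - (M ^ n).trace := by
  rw [pow_add, sq_eq_trace_smul_sub_det_smul, hM, one_smul, mul_sub, mul_smul_comm, mul_one,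
    ← pow_succ, trace_sub, trace_smul, smul_eq_mul]

theorem strictMono_abs_trace_pow [LinearOrder R] [IsStrictOrderedRing R]
    {M : Matrix (Fin 2) (Fin 2) R} (hM : M.det = 1) (h : 2 < |M.trace|) :
    StrictMono fun n : ℕ => |(M ^ n).trace| := by
  refine strictMono_nat_of_lt_succ fun n => ?_
  induction n with
  | zero => simpa using h
  | succ n ih =>
    have key : |M.trace| * |(M ^ (n + 1)).trace| - |(M ^ n).trace| ≤ |(M ^ (n + 2)).trace| := by
      rw [trace_pow_add_two hM, ← abs_mul]
      exact abs_sub_abs_le_abs_sub _ _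
    nlinarith [abs_nonneg (M ^ (n + 1)).trace]

namespace SpecialLinearGroup

theorem trace_inv_mul_mul {n : Type*} [Fintype n] [DecidableEq n]
    (P A : SpecialLinearGroup n R) :
    ((P⁻¹ * A * P : SpecialLinearGroup n R) : Matrix n n R).trace = (A : Matrix n n R).trace := by
  rw [coe_mul, coe_mul, trace_mul_cycle, ← coe_mul, mul_inv_cancel, coe_one, one_mul]

abbrev upperTransvection (s : R) : SL(2, R) := transvection (zero_ne_one : (0 : Fin 2) ≠ 1) s

theorem apply_zero_zero_mul_apply_one_one {T : SL(2, R)} (hT : T 1 0 = 0) :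
    T 0 0 * T 1 1 = 1 := by
  have := T.det_coe
  rwa [det_fin_two, hT, mul_zero, sub_zero] at this

theorem inv_apply_one_zero {T : SL(2, R)} (hT : T 1 0 = 0) : T⁻¹ 1 0 = 0 := by
  simp [coe_inv, adjugate_fin_two, hT]

theorem conj_upperTransvection {T : SL(2, R)} (hT : T 1 0 = 0) (s : R) :
    T * upperTransvection s * T⁻¹ = upperTransvection (T 0 0 ^ 2 * s) := by
  have hdet := apply_zero_zero_mul_apply_one_one hT
  ext i j
  fin_cases i <;> fin_cases j <;>
    simp [coe_inv, adjugate_fin_two, transvection_coe, mul_apply, Fin.sum_univ_two, hT,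
      single_apply] <;> grind

theorem pow_conj_upperTransvection {T : SL(2, R)} (hT : T 1 0 = 0) (s : R) (n : ℕ) :
    T ^ n * upperTransvection s * (T ^ n)⁻¹ = upperTransvection ((T 0 0 ^ 2) ^ n * s) := by
  induction n with
  | zero => simp
  | succ n ih =>
    calc T ^ (n + 1) * upperTransvection s * (T ^ (n + 1))⁻¹
        = T * (T ^ n * upperTransvection s * (T ^ n)⁻¹) * T⁻¹ := by group
      _ = _ := by rw [ih, conj_upperTransvection hT]; ring_nf

theorem sq_eq_upperTransvection {V : SL(2, R)} (h10 : V 1 0 = 0) (hdiag : V 0 0 = V 1 1) :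
    V ^ 2 = upperTransvection (2 * V 0 0 * V 0 1) := by
  have hdet := apply_zero_zero_mul_apply_one_one h10
  ext i j
  fin_cases i <;> fin_cases j <;>
    simp [sq, transvection_coe, mul_apply, Fin.sum_univ_two, h10] <;> grind

theorem apply_one_zero_eq_zero_of_smul_mk_eq {K : Type*} [Field K] {g : SL(2, K)}
    {v : Fin 2 → K} (hv : v ≠ 0) (hv1 : v 1 = 0)
    (h : g • Projectivization.mk K v hv = Projectivization.mk K v hv) : g 1 0 = 0 := by
  rw [Projectivization.smul_mk, Projectivization.mk_eq_mk_iff] at h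
  obtain ⟨a, ha⟩ := h
  have hv0 : v 0 ≠ 0 := fun h0 => hv (by ext i; fin_cases i <;> simp [h0, hv1])
  have := congrFun ha 1
  simp only [Pi.smul_apply, hv1, smul_zero, SpecialLinearGroup.smul_def, smul_eq_mulVec, mulVec,
    dotProduct, Fin.sum_univ_two, mul_zero, add_zero, zero_eq_mul] at this
  exact this.resolve_right hv0

theorem abs_apply_zero_zero_lt_one_or_inv {T : SL(2, ℝ)} (hT : T 1 0 = 0)
    (htr : 2 < |(T : Matrix (Fin 2) (Fin 2) ℝ).trace|) : |T 0 0| < 1 ∨ |T⁻¹ 0 0| < 1 := by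
  have habs : |T 0 0| * |T 1 1| = 1 := by
    rw [← abs_mul, apply_zero_zero_mul_apply_one_one hT, abs_one]
  rw [trace_fin_two] at htr
  simp only [coe_inv, adjugate_fin_two, of_apply, cons_val', cons_val_zero, cons_val_fin_one]
  by_contra! h
  nlinarith [abs_add_le (T 0 0) (T 1 1)]

theorem isParabolic_mapGL_of_abs_trace_eq_two {B : SL(2, ℝ)} (h1 : B ≠ 1) (hm1 : B ≠ -1)
    (htr : |(B : Matrix (Fin 2) (Fin 2) ℝ).trace| = 2) : (mapGL ℝ B).IsParabolic := by
  refine ⟨?_, ?_⟩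
  · rintro ⟨a, ha⟩
    have hB : (B : Matrix (Fin 2) (Fin 2) ℝ) = scalar (Fin 2) a := by simpa using ha.symm
    have ha : a = 1 ∨ a = -1 := by simpa [hB] using B.det_coe
    rcases ha with rfl | rfl
    · exact h1 (by ext i j; fin_cases i <;> fin_cases j <;> simp [hB])
    · exact hm1 (by ext i j; fin_cases i <;> fin_cases j <;> simp [hB])
  · norm_num [discr_fin_two, ← sq_abs, htr]

theorem tendsto_conj_upperTransvection {ι : Type*} {l : Filter ι} (P : SL(2, ℝ)) {c : ι → ℝ}
    (hc : Tendsto c l (𝓝 0)) :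
    Tendsto (fun i => ((P * upperTransvection (c i) * P⁻¹ : SL(2, ℝ)) : Matrix (Fin 2) (Fin 2) ℝ))
      l (𝓝 1) := by
  have hcont : Continuous fun s : ℝ =>
      ((P * upperTransvection s * P⁻¹ : SL(2, ℝ)) : Matrix (Fin 2) (Fin 2) ℝ) := by
    have hsingle : Continuous fun s : ℝ => single (0 : Fin 2) (1 : Fin 2) s :=
      (continuous_id.smul (continuous_const (y := single (0 : Fin 2) (1 : Fin 2) (1 : ℝ)))).congr
        fun s => by simp [smul_single]
    simp only [coe_mul, transvection_coe]
    fun_prop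
  have h0 : ((P * upperTransvection 0 * P⁻¹ : SL(2, ℝ)) : Matrix (Fin 2) (Fin 2) ℝ) = 1 := by simp
  exact h0 ▸ (hcont.tendsto 0).comp hc

end SpecialLinearGroup

end Matrix

open Matrix SpecialLinearGroup

theorem UpperHalfPlane.smul_ne_self_of_isParabolic {g : GL (Fin 2) ℝ} (hdet : 0 < g.val.det)
    (hg : g.IsParabolic) (z : ℍ) : g • z ≠ z := fun hz =>
  (isElliptic_of_exists_smul_eq_self hdet
    (fun hc => hg.1 (GeneralLinearGroup.mem_center_iff_val_mem_range_scalar.1 hc)) ⟨z, hz⟩).ne hg.2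

theorem exists_pow_smul_eq_of_finite {G X : Type*} [Group G] [MulAction G X] {Γ : Subgroup G}
    {z : X} (hfin : {w | ∃ γ ∈ Γ, γ • z = w}.Finite) {g : G} (hg : g ∈ Γ) :
    ∃ n ≠ 0, g ^ n • z = z := by
  have hmem (n : ℕ) : g ^ n • z ∈ {w | ∃ γ ∈ Γ, γ • z = w} := ⟨g ^ n, pow_mem hg n, rfl⟩
  obtain ⟨a, b, hab, h⟩ := hfin.exists_lt_map_eq_of_forall_mem hmem
  refine ⟨b - a, by omega, smul_left_cancel (g ^ a) ?_⟩
  rw [smul_smul, ← pow_add, Nat.add_sub_cancel' hab.le]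
  exact h.symm

theorem projAct_eq_smul (g : SL(2, ℝ)) (x : RP1) : projAct g x = g • x := by
  induction x using Projectivization.ind with
  | h v hv => rfl

theorem Subgroup.eventually_eq_one_of_tendsto {Γ : Subgroup SL(2, ℝ)} [DiscreteTopology Γ]
    {ι : Type*} {l : Filter ι} {g : ι → SL(2, ℝ)} (hg : ∀ i, g i ∈ Γ)
    (h : Tendsto (fun i => (g i : Matrix (Fin 2) (Fin 2) ℝ)) l (𝓝 1)) : ∀ᶠ i in l, g i = 1 := by
  have hind : IsInducing fun γ : Γ => ((γ : SL(2, ℝ)) : Matrix (Fin 2) (Fin 2) ℝ) :=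
    (IsInducing.induced _).comp IsInducing.subtypeVal
  have hlim : Tendsto (fun i => (⟨g i, hg i⟩ : Γ)) l (𝓝 1) := hind.tendsto_nhds_iff.2 h
  rw [nhds_discrete, tendsto_pure] at hlim
  filter_upwards [hlim] with i hi using congrArg Subtype.val hi

theorem Subgroup.not_discreteTopology_of_conj_contracting {Γ : Subgroup SL(2, ℝ)}
    {C U P : SL(2, ℝ)} (hC : C ∈ Γ) (hU : U ∈ Γ) (h10 : (P⁻¹ * C * P) 1 0 = 0)
    (h00 : |(P⁻¹ * C * P) 0 0| < 1) {s : ℝ} (hs : s ≠ 0)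
    (hUP : P⁻¹ * U * P = upperTransvection s) : ¬ DiscreteTopology Γ := by
  intro hd
  set T := P⁻¹ * C * P
  have hconj (n : ℕ) :
      C ^ n * U * (C ^ n)⁻¹ = P * upperTransvection ((T 0 0 ^ 2) ^ n * s) * P⁻¹ := by
    have hTn : T ^ n = P⁻¹ * C ^ n * P := by simpa using conj_pow (a := P⁻¹) (b := C) (i := n)
    rw [← pow_conj_upperTransvection h10, ← hUP, hTn]
    group
  have hlim : Tendsto (fun n => ((C ^ n * U * (C ^ n)⁻¹ : SL(2, ℝ)) : Matrix (Fin 2) (Fin 2) ℝ))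
      atTop (𝓝 1) := by
    simp only [hconj]
    refine tendsto_conj_upperTransvection P ?_
    simpa using (tendsto_pow_atTop_nhds_zero_of_abs_lt_one
      (by rwa [abs_pow, sq_lt_one_iff₀ (abs_nonneg _)] : |T 0 0 ^ 2| < 1)).mul_const s
  obtain ⟨n, hn⟩ := (Subgroup.eventually_eq_one_of_tendsto (fun n => Γ.mul_mem
    (Γ.mul_mem (Γ.pow_mem hC n) hU) (Γ.inv_mem (Γ.pow_mem hC n))) hlim).exists
  rw [hconj, mul_inv_eq_one, mul_eq_left] at hn
  have h01 := congrArg (fun g : SL(2, ℝ) => (g : Matrix (Fin 2) (Fin 2) ℝ) 0 1) hn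
  simp [transvection_coe, hs, left_ne_zero_of_mul_eq_one (apply_zero_zero_mul_apply_one_one h10)]
    at h01

theorem Subgroup.not_discreteTopology_of_smul_eq_of_smul_eq {Γ : Subgroup SL(2, ℝ)}
    {A B : SL(2, ℝ)} (hA : A ∈ Γ) (hB : B ∈ Γ)
    (hAtr : 2 < |(A : Matrix (Fin 2) (Fin 2) ℝ).trace|) (hBpar : (mapGL ℝ B).IsParabolic)
    {x : RP1} (hAx : A • x = x) (hBx : B • x = x) : ¬ DiscreteTopology Γ := by
  have hv : (![1, 0] : Fin 2 → ℝ) ≠ 0 := by simp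
  obtain ⟨P, hP⟩ := MulAction.exists_smul_eq SL(2, ℝ) (Projectivization.mk ℝ _ hv) x
  have hup {g : SL(2, ℝ)} (hg : g • x = x) : (P⁻¹ * g * P) 1 0 = 0 :=
    apply_one_zero_eq_zero_of_smul_mk_eq hv rfl
      (by rw [mul_smul, mul_smul, hP, hg, inv_smul_eq_iff, hP])
  set V := P⁻¹ * B * P
  have hV10 : V 1 0 = 0 := hup hBx
  have hVpar : (mapGL ℝ V).IsParabolic := by simpa [V] using hBpar
  obtain ⟨hVdiag, hV01⟩ :=
    (GeneralLinearGroup.isParabolic_iff_of_upperTriangular (by simpa using hV10)).1 hVpar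
  -- `V` has `±1` on the diagonal; its square is a genuine transvection.
  have hU : P⁻¹ * B ^ 2 * P = upperTransvection (2 * V 0 0 * V 0 1) := by
    rw [← sq_eq_upperTransvection hV10 (by simpa using hVdiag)]
    simpa using (conj_pow (a := P⁻¹) (b := B) (i := 2)).symm
  have hs : 2 * V 0 0 * V 0 1 ≠ 0 := mul_ne_zero (mul_ne_zero two_ne_zero
    (left_ne_zero_of_mul_eq_one (apply_zero_zero_mul_apply_one_one hV10))) (by simpa using hV01)
  have hT10 := hup hAx
  have hTinv : P⁻¹ * A⁻¹ * P = (P⁻¹ * A * P)⁻¹ := by group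
  rcases abs_apply_zero_zero_lt_one_or_inv hT10 (by rwa [trace_inv_mul_mul]) with hlt | hlt
  · exact not_discreteTopology_of_conj_contracting hA (pow_mem hB 2) hT10 hlt hs hU
  · exact not_discreteTopology_of_conj_contracting (inv_mem hA) (pow_mem hB 2)
      (by rw [hTinv]; exact inv_apply_one_zero hT10) (by rwa [hTinv]) hs hU

/-- An elementary discrete subgroup of `SL(2, ℝ)` cannot contain both a parabolic
element and a hyperbolic element. -/
theorem elementary_discrete_no_parabolic_and_hyperbolic
    (Γ : Subgroup SL(2, ℝ)) (hd : DiscreteTopology Γ) (he : IsElementary Γ) :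
    ¬ ((∃ B ∈ Γ, B ≠ 1 ∧ B ≠ -1 ∧ |Matrix.trace (B : Matrix (Fin 2) (Fin 2) ℝ)| = 2) ∧
       (∃ A ∈ Γ, 2 < |Matrix.trace (A : Matrix (Fin 2) (Fin 2) ℝ)|)) := by
  rintro ⟨⟨B, hBΓ, hB1, hBm1, hBtr⟩, A, hAΓ, hAtr⟩
  have hB := isParabolic_mapGL_of_abs_trace_eq_two hB1 hBm1 hBtr
  have hBpow {n : ℕ} (hn : n ≠ 0) : (mapGL ℝ (B ^ n)).IsParabolic := by
    rw [map_pow]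
    exact hB.pow hn
  rcases he with ⟨z, hfin⟩ | ⟨x, hfin⟩
  · obtain ⟨n, hn, hfix⟩ := exists_pow_smul_eq_of_finite hfin hBΓ
    exact UpperHalfPlane.smul_ne_self_of_isParabolic (by simp) (hBpow hn) z hfix
  · simp only [projAct_eq_smul] at hfin
    obtain ⟨n, hn, hBx⟩ := exists_pow_smul_eq_of_finite hfin hBΓ
    obtain ⟨m, hm, hAx⟩ := exists_pow_smul_eq_of_finite hfin hAΓ
    have hAm : 2 < |((A ^ m : SL(2, ℝ)) : Matrix (Fin 2) (Fin 2) ℝ).trace| := by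
      rw [Matrix.SpecialLinearGroup.coe_pow]
      simpa using strictMono_abs_trace_pow A.det_coe hAtr (Nat.pos_of_ne_zero hm)
    exact Subgroup.not_discreteTopology_of_smul_eq_of_smul_eq (pow_mem hAΓ m) (pow_mem hBΓ n)
      hAm (hBpow hn) hAx hBx hd
end

section
/- A subgroup Γ of SL(2,ℝ) is discrete if and only if the action of Γ on the upper half-plane ℍ is properly discontinuous (in the sense of Mathlib's ProperlyDiscontinuousSMul: for all compact sets K, L ⊆ ℍ, only finitely many γ ∈ Γ satisfy γ • K ∩ L ≠ ∅). -/
/-!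
A discrete subgroup of `SL(2, ℝ)` is closed, so it inherits the proper action of `SL(2, ℝ)` on `ℍ`,
and a proper action of a discrete group is properly discontinuous. Conversely, applying proper
discontinuity to `{z}` and `K • z` shows that every compact `K ⊆ SL(2, ℝ)` meets `Γ` in finitely
many points, which in a locally compact group makes `Γ` discrete.
-/

open Matrix UpperHalfPlane
open scoped MatrixGroups

instance Matrix.SpecialLinearGroup.instLocallyCompactSpace {n R : Type*} [Fintype n]
    [DecidableEq n] [CommRing R] [TopologicalSpace R] [IsTopologicalRing R] [T1Space R]
    [LocallyCompactSpace R] : LocallyCompactSpace (SpecialLinearGroup n R) :=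
  haveI : LocallyCompactSpace (Matrix n n R) := inferInstanceAs (LocallyCompactSpace (n → n → R))
  isClosedEmbedding_val.locallyCompactSpace

open Set in
theorem Subgroup.discreteTopology_of_properlyDiscontinuousSMul {G X : Type*} [Group G]
    [TopologicalSpace G] [T1Space G] [WeaklyLocallyCompactSpace G] [TopologicalSpace X]
    [MulAction G X] [ContinuousSMul G X] [Nonempty X] (Γ : Subgroup G)
    [ProperlyDiscontinuousSMul Γ X] : DiscreteTopology Γ := by
  refine continuous_subtype_val.discrete_of_tendsto_cofinite_cocompact
    (tendsto_cofinite_cocompact_iff.mpr fun K hK ↦ ?_)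
  obtain ⟨x⟩ := ‹Nonempty X›
  have hKx : IsCompact ((· • x) '' K) := hK.image (continuous_id.smul continuous_const)
  refine (ProperlyDiscontinuousSMul.finite_disjoint_inter_image (Γ := Γ)
    (isCompact_singleton (x := x)) hKx).subset fun γ hγ ↦ ?_
  exact ⟨γ • x, mem_image_of_mem _ rfl, mem_image_of_mem _ hγ⟩

/-- A subgroup of `SL(2, ℝ)` is discrete if and only if its action on the upper
half-plane is properly discontinuous. -/
theorem discrete_iff_properlyDiscontinuous (Γ : Subgroup SL(2, ℝ)) :
    DiscreteTopology Γ ↔ ProperlyDiscontinuousSMul Γ ℍ := by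
  -- The topology above is definitionally Mathlib's; switching to it lets Mathlib's instances apply.
  let : TopologicalSpace SL(2, ℝ) := Matrix.SpecialLinearGroup.instTopologicalSpace
  exact ⟨fun hΓ ↦ @UpperHalfPlane.instProperlyDiscontinuousSL2RSubgroup Γ hΓ,
    fun _ ↦ Γ.discreteTopology_of_properlyDiscontinuousSMul (X := ℍ)⟩
end
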